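/- Let V be a normal algebra of differential functions with surjective derivation ∂ on its quasiconstant field F, and let K(∂) be a quasiconstant ℓ×ℓ matrix differential operator with invertible leading coefficient. Then the variational derivative gives a bijection δ/δu : Z_K^{−1} → ker(K(∂)|_{F^ℓ}), where Z_K^{−1} = {∫f ∈ V/∂V : K*(∂)(δf/δu) = 0} (with K replaced by K* as appropriate); its inverse sends F = (f₁,…,f_ℓ) ∈ ker(K(∂)|_{F^ℓ}) to ∫ Σ_i f_i u_i. -/
import Mathlib


/-- An algebra of differential functions in `ℓ` variables (see the paper). -/
structure ADF (ℓ : ℕ) (V : Type) [CommRing V] where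
  d : V → V
  d_add : ∀ a b, d (a + b) = d a + d b
  d_mul : ∀ a b, d (a * b) = d a * b + a * d b
  pd : Fin ℓ → ℕ → V → V
  pd_add : ∀ i n a b, pd i n (a + b) = pd i n a + pd i n b
  pd_mul : ∀ i n a b, pd i n (a * b) = pd i n a * b + a * pd i n b
  pd_comm : ∀ i n j m f, pd i n (pd j m f) = pd j m (pd i n f)
  finite_dep : ∀ f : V, ∃ M : ℕ, ∀ i n, M ≤ n → pd i n f = 0
  pd_d : ∀ i n f, pd i (n + 1) (d f) = d (pd i (n + 1) f) + pd i n f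
  pd_d0 : ∀ i f, pd i 0 (d f) = d (pd i 0 f)
  u : Fin ℓ → V
  pd_u : ∀ i n j m, pd i n (d^[m] (u j)) = if i = j ∧ n = m then 1 else 0

/-- `f` is a quasiconstant. -/
def ADF.quasi {ℓ : ℕ} {V : Type} [CommRing V] (A : ADF ℓ V) (f : V) : Prop :=
  ∀ i n, A.pd i n f = 0

/-- `P = δf/δu` is the variational derivative of `f`:
`P_j = Σ_{k<M} (−∂)^k ∂f/∂u_j^{(k)}` for some (hence any) bound `M` on the
differential variables occurring in `f`. -/
def ADF.isVarDer {ℓ : ℕ} {V : Type} [CommRing V] (A : ADF ℓ V)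
    (f : V) (P : Fin ℓ → V) : Prop :=
  ∃ M : ℕ, (∀ i n, M ≤ n → A.pd i n f = 0) ∧
    ∀ j, P j = ∑ k ∈ Finset.range M, (-1 : V) ^ k * A.d^[k] (A.pd j k f)

/-- `f` belongs to the filtration piece `V_{m,i}`: `∂f/∂u_j^{(n)} = 0` whenever
`(n,j) > (m,i)` in the lexicographic order. -/
def ADF.inFiltr {ℓ : ℕ} {V : Type} [CommRing V] (A : ADF ℓ V)
    (m : ℕ) (i : Fin ℓ) (f : V) : Prop :=
  ∀ (j : Fin ℓ) (n : ℕ), (m < n ∨ (n = m ∧ i < j)) → A.pd j n f = 0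


namespace ADF

variable {ℓ : ℕ} {V : Type} [CommRing V] (A : ADF ℓ V)

/-- `pd` as an additive monoid hom. -/
def pdHom (i : Fin ℓ) (n : ℕ) : V →+ V := AddMonoidHom.mk' (A.pd i n) (A.pd_add i n)

/-- `d` as an additive monoid hom. -/
def dHom : V →+ V := AddMonoidHom.mk' A.d A.d_add

@[simp] lemma pd_zero (i : Fin ℓ) (n : ℕ) : A.pd i n 0 = 0 := (A.pdHom i n).map_zero

@[simp] lemma d_zero : A.d 0 = 0 := A.dHom.map_zero

lemma pd_sub (i : Fin ℓ) (n : ℕ) (a b : V) : A.pd i n (a - b) = A.pd i n a - A.pd i n b :=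
  (A.pdHom i n).map_sub a b

lemma d_sub (a b : V) : A.d (a - b) = A.d a - A.d b := A.dHom.map_sub a b

lemma d_iter_zero (k : ℕ) : A.d^[k] (0 : V) = 0 := by
  induction k with
  | zero => rfl
  | succ k ih => rw [Function.iterate_succ_apply', ih, A.d_zero]

lemma d_iter_sub (k : ℕ) (a b : V) : A.d^[k] (a - b) = A.d^[k] a - A.d^[k] b := by
  induction k with
  | zero => rfl
  | succ k ih => rw [Function.iterate_succ_apply', Function.iterate_succ_apply',
      Function.iterate_succ_apply', ih, A.d_sub]

lemma d_iter_add (k : ℕ) (a b : V) : A.d^[k] (a + b) = A.d^[k] a + A.d^[k] b := by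
  induction k with
  | zero => rfl
  | succ k ih => rw [Function.iterate_succ_apply', Function.iterate_succ_apply',
      Function.iterate_succ_apply', ih, A.d_add]

lemma pd_sum (i : Fin ℓ) (n : ℕ) {α : Type*} (s : Finset α) (f : α → V) :
    A.pd i n (∑ a ∈ s, f a) = ∑ a ∈ s, A.pd i n (f a) :=
  map_sum (A.pdHom i n) f s

@[simp] lemma pd_one (i : Fin ℓ) (n : ℕ) : A.pd i n (1 : V) = 0 := by
  have := A.pd_mul i n 1 1
  simp at this
  exact this

lemma pd_neg_one_pow (i : Fin ℓ) (n k : ℕ) : A.pd i n ((-1 : V) ^ k) = 0 := by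
  induction k with
  | zero => simp
  | succ k ih =>
    rw [pow_succ, A.pd_mul]
    rw [ih]
    have : A.pd i n (-1 : V) = -A.pd i n (1 : V) := (A.pdHom i n).map_neg 1
    simp [this]

lemma pd_quasi_mul (i : Fin ℓ) (n : ℕ) {c : V} (hc : ∀ i n, A.pd i n c = 0) (x : V) :
    A.pd i n (c * x) = c * A.pd i n x := by
  rw [A.pd_mul, hc, zero_mul, zero_add]

lemma pd_neg_one_pow_mul (i : Fin ℓ) (n k : ℕ) (x : V) :
    A.pd i n ((-1 : V) ^ k * x) = (-1 : V) ^ k * A.pd i n x := by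
  rw [A.pd_mul, A.pd_neg_one_pow, zero_mul, zero_add]

lemma neg_one_pow_cancel {r : ℕ} {z : V} (h : (-1 : V) ^ r * z = 0) : z = 0 := by
  have h2 : (-1 : V) ^ r * ((-1 : V) ^ r * z) = 0 := by rw [h, mul_zero]
  rwa [← mul_assoc, ← mul_pow, neg_mul_neg, one_mul, one_pow, one_mul] at h2


/-- D1: if `g` does not depend on variables of level `> m` (in direction `j`),
then `∂_{j,q} ∂^k g = 0` for `q > k + m`. -/
lemma D1 (j : Fin ℓ) (m : ℕ) : ∀ (k : ℕ) (g : V), (∀ b, m < b → A.pd j b g = 0) →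
    ∀ q, k + m < q → A.pd j q (A.d^[k] g) = 0 := by
  intro k
  induction k with
  | zero => intro g hg q hq; simpa using hg q (by omega)
  | succ k ih =>
    intro g hg q hq
    obtain ⟨q', rfl⟩ : ∃ q', q = q' + 1 := ⟨q - 1, by omega⟩
    rw [Function.iterate_succ_apply', A.pd_d, ih g hg (q' + 1) (by omega),
      ih g hg q' (by omega), A.d_zero, add_zero]

/-- D2: top-order term of the commutation formula. -/
lemma D2 (j : Fin ℓ) (m : ℕ) : ∀ (k : ℕ) (g : V), (∀ b, m < b → A.pd j b g = 0) →
    A.pd j (k + m) (A.d^[k] g) = A.pd j m g := by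
  intro k
  induction k with
  | zero => intro g _; simp
  | succ k ih =>
    intro g hg
    have : k + 1 + m = (k + m) + 1 := by omega
    rw [this, Function.iterate_succ_apply', A.pd_d, A.D1 j m k g hg (k + m + 1) (by omega),
      A.d_zero, zero_add, ih g hg]

/-- D3: subprincipal term of the commutation formula. -/
lemma D3 (j : Fin ℓ) (r : ℕ) : ∀ (k : ℕ) (g : V), (∀ b, r + 1 < b → A.pd j b g = 0) →
    A.pd j (k + r + 1) (A.d^[k + 1] g) =
      (k + 1) • A.d (A.pd j (r + 1) g) + A.pd j r g := by
  intro k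
  induction k with
  | zero => intro g hg; simpa using A.pd_d j r g
  | succ k ih =>
    intro g hg
    have e1 : k + 1 + r + 1 = (k + r + 1) + 1 := by omega
    rw [e1, Function.iterate_succ_apply', A.pd_d, ih g hg]
    have e2 : k + r + 1 + 1 = (k + 1) + (r + 1) := by omega
    rw [e2, A.D2 j (r + 1) (k + 1) g (fun b hb => hg b (by omega))]
    rw [succ_nsmul]
    ring

/-- The Euler-operator partial sum. -/
def S (M : ℕ) (j : Fin ℓ) (f : V) : V :=
  ∑ k ∈ Finset.range M, (-1 : V) ^ k * A.d^[k] (A.pd j k f)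

lemma S_sub (M : ℕ) (j : Fin ℓ) (f g : V) : A.S M j (f - g) = A.S M j f - A.S M j g := by
  unfold S
  rw [← Finset.sum_sub_distrib]
  refine Finset.sum_congr rfl fun k _ => ?_
  rw [A.pd_sub, A.d_iter_sub, mul_sub]

lemma S_stable {M M' : ℕ} (h : M ≤ M') (j : Fin ℓ) {f : V}
    (hf : ∀ i n, M ≤ n → A.pd i n f = 0) : A.S M' j f = A.S M j f := by
  unfold S
  refine (Finset.sum_subset (Finset.range_subset_range.2 h) fun k _ hk => ?_).symm
  rw [hf j k (by simpa using hk), A.d_iter_zero, mul_zero]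

/-- `δ(∂g)/δu = 0` (integration by parts / telescoping). -/
lemma S_d_zero (M : ℕ) (j : Fin ℓ) (g : V) (hg : ∀ i n, M ≤ n → A.pd i n g = 0) :
    A.S (M + 1) j (A.d g) = 0 := by
  set W : ℕ → V := fun k => match k with
    | 0 => 0
    | k + 1 => (-1 : V) ^ k * A.d^[k + 1] (A.pd j k g) with hW
  have hterm : ∀ k, (-1 : V) ^ k * A.d^[k] (A.pd j k (A.d g)) = W (k + 1) - W k := by
    intro k
    cases k with
    | zero => simp [hW, A.pd_d0]
    | succ k =>
      rw [A.pd_d]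
      simp only [hW]
      rw [Function.iterate_succ_apply', A.d_iter_add, A.d_add,
        ← Function.iterate_succ_apply A.d k, ← Function.iterate_succ_apply' A.d (k+1),
        ← Function.iterate_succ_apply' A.d k]
      rw [pow_succ]
      ring
  have := Finset.sum_range_sub W (M + 1)
  calc A.S (M + 1) j (A.d g) = ∑ k ∈ Finset.range (M + 1), (W (k + 1) - W k) :=
        Finset.sum_congr rfl fun k _ => hterm k
    _ = W (M + 1) - W 0 := Finset.sum_range_sub W (M + 1)
    _ = 0 := by
        simp only [hW]
        rw [hg j M le_rfl, A.d_iter_zero, mul_zero, sub_zero]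


/-- Part (a): elements of `ker K(∂)` over `V^ℓ` are quasiconstant. -/
lemma kernel_quasi {N : ℕ} (K : Fin (N + 1) → Matrix (Fin ℓ) (Fin ℓ) V)
    (hKq : ∀ n i j, A.quasi (K n i j)) (L : Matrix (Fin ℓ) (Fin ℓ) V)
    (hLK : L * K (Fin.last N) = 1) (P : Fin ℓ → V)
    (hP : ∀ i, ∑ n : Fin (N + 1), ∑ j, K n i j * A.d^[(n : ℕ)] (P j) = 0) :
    ∀ j, A.quasi (P j) := by
  choose M hM using fun j => A.finite_dep (P j)
  set B := Finset.univ.sup M with hB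
  have hMB : ∀ j, M j ≤ B := fun j => Finset.le_sup (Finset.mem_univ j)
  have key : ∀ q, (∀ (a : Fin ℓ) (b : ℕ) (j : Fin ℓ), q < b → A.pd a b (P j) = 0) →
      ∀ (a : Fin ℓ) (j : Fin ℓ), A.pd a q (P j) = 0 := by
    intro q hq a j
    have hterm : ∀ (c : Fin ℓ) (n : Fin (N + 1)) (k : Fin ℓ),
        A.pd a (q + N) (K n c k * A.d^[(n : ℕ)] (P k))
        = if (n : ℕ) = N then K n c k * A.pd a q (P k) else 0 := by
      intro c n k
      rw [A.pd_quasi_mul a (q + N) (hKq n c k)]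
      by_cases hn : (n : ℕ) = N
      · rw [if_pos hn]
        have he : q + N = (n : ℕ) + q := by omega
        rw [he, A.D2 a q (n : ℕ) (P k) (fun b hb => hq a b k hb)]
      · rw [if_neg hn,
          A.D1 a q (n : ℕ) (P k) (fun b hb => hq a b k hb) (q + N) (by omega), mul_zero]
    have hrow : ∀ c : Fin ℓ, ∑ k, K (Fin.last N) c k * A.pd a q (P k) = 0 := by
      intro c
      have h0 := congrArg (A.pd a (q + N)) (hP c)
      rw [A.pd_zero] at h0
      rw [A.pd_sum] at h0
      simp only [A.pd_sum] at h0
      rw [← h0]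
      rw [Finset.sum_eq_single (Fin.last N)]
      · refine Finset.sum_congr rfl fun k _ => ?_
        rw [hterm, if_pos (by simp)]
      · intro n _ hn
        refine Finset.sum_eq_zero fun k _ => ?_
        rw [hterm, if_neg (Nat.ne_of_lt (Fin.val_lt_last hn))]
      · intro h; exact absurd (Finset.mem_univ _) h
    calc A.pd a q (P j)
        = ∑ k, (1 : Matrix (Fin ℓ) (Fin ℓ) V) j k * A.pd a q (P k) := by
          simp [Matrix.one_apply]
      _ = ∑ k, (∑ b, L j b * K (Fin.last N) b k) * A.pd a q (P k) := by
          refine Finset.sum_congr rfl fun k _ => ?_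
          rw [← hLK, Matrix.mul_apply]
      _ = ∑ b, L j b * ∑ k, K (Fin.last N) b k * A.pd a q (P k) := by
          simp only [Finset.sum_mul, Finset.mul_sum, mul_assoc]
          rw [Finset.sum_comm]
      _ = 0 := Finset.sum_eq_zero fun b _ => by rw [hrow b, mul_zero]
  have main : ∀ t q, B ≤ q + t → ∀ (a : Fin ℓ) (j : Fin ℓ), A.pd a q (P j) = 0 := by
    intro t
    induction t with
    | zero => intro q hq a j; exact hM j a q (le_trans (hMB j) (by omega))
    | succ t ih =>
      intro q hq a j
      exact key q (fun a b j hb => ih b (by omega) a j) a j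
  intro j a n
  exact main B n (by omega) a j

/-- Part (b): `δ(Σ P_i u_i)/δu = P` for quasiconstant `P`. -/
lemma varDer_linear (P : Fin ℓ → V) (hPq : ∀ j, A.quasi (P j)) :
    A.isVarDer (∑ i, P i * A.u i) P := by
  have hpd : ∀ (j : Fin ℓ) (k : ℕ),
      A.pd j k (∑ i, P i * A.u i) = if k = 0 then P j else 0 := by
    intro j k
    rw [A.pd_sum]
    have hone : ∀ i, A.pd j k (P i * A.u i) = if j = i ∧ k = 0 then P i else 0 := by
      intro i
      rw [A.pd_mul, hPq i j k, zero_mul, zero_add]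
      have hu : A.pd j k (A.u i) = if j = i ∧ k = 0 then 1 else 0 := by
        simpa using A.pd_u j k i 0
      rw [hu]
      split <;> simp
    simp only [hone]
    by_cases hk : k = 0
    · subst hk; simp
    · simp [hk]
  refine ⟨1, fun i n hn => ?_, fun j => ?_⟩
  · rw [hpd, if_neg (by omega)]
  · rw [Finset.sum_range_one]
    simp [hpd]


/-- Descent within level `m`: remove dependence on `u_j^{(m)}`, `j < t`, modulo `∂V`,
for elements killed by the Euler operator. -/
lemma descend (hnormal : ∀ (i : Fin ℓ) (m : ℕ) (f : V), A.inFiltr m i f →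
      ∃ g, A.inFiltr m i g ∧ A.pd i m g = f) (m : ℕ) :
    ∀ t, t ≤ ℓ → ∀ h : V,
      (∀ (j : Fin ℓ) (n : ℕ), (m < n ∨ (n = m ∧ t ≤ (j : ℕ))) → A.pd j n h = 0) →
      (∀ j, A.S (m + 1) j h = 0) →
      ∃ h' v, (∀ (j : Fin ℓ) (n : ℕ), m ≤ n → A.pd j n h' = 0) ∧
        (∀ j, A.S (m + 1) j h' = 0) ∧ h = h' + A.d v := by
  intro t
  induction t with
  | zero =>
    intro _ h hfil hS
    refine ⟨h, 0, fun j n hn => ?_, hS, by rw [A.d_zero, add_zero]⟩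
    rcases Nat.eq_or_lt_of_le hn with heq | hlt
    · exact hfil j n (Or.inr ⟨heq.symm, Nat.zero_le _⟩)
    · exact hfil j n (Or.inl hlt)
  | succ t ih =>
    intro ht h hfil hS
    set i : Fin ℓ := ⟨t, by omega⟩ with hidef
    cases m with
    | zero =>
      have h0 : A.pd i 0 h = 0 := by
        have h1 := hS i
        rw [S, Finset.sum_range_one] at h1
        simpa using h1
      refine ih (by omega) h (fun j n hn => ?_) hS
      rcases hn with hn | ⟨rfl, hj⟩
      · exact hfil j n (Or.inl hn)
      · rcases Nat.eq_or_lt_of_le hj with heq | hlt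
        · have hji : j = i := Fin.ext heq.symm
          rw [hji]; exact h0
        · exact hfil j 0 (Or.inr ⟨rfl, by omega⟩)
    | succ r =>
      -- level `m = r + 1 ≥ 1`
      have glev : ∀ (k : ℕ) (a : Fin ℓ) (b : ℕ), r + 1 < b →
          A.pd a b (A.pd i k h) = 0 := by
        intro k a b hb
        rw [A.pd_comm, hfil a b (Or.inl hb), A.pd_zero]
      -- (α) all second derivatives at top level vanish
      have halpha : ∀ a : Fin ℓ, A.pd a (r + 1) (A.pd i (r + 1) h) = 0 := by
        intro a
        have h0 : A.pd a ((r + 1) + (r + 1)) (A.S (r + 1 + 1) i h) = 0 := by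
          rw [hS i, A.pd_zero]
        rw [S, A.pd_sum] at h0
        simp only [A.pd_neg_one_pow_mul] at h0
        rw [Finset.sum_eq_single_of_mem (r + 1) (Finset.self_mem_range_succ (r + 1))
          (fun k hk hkne => by
            rw [A.D1 a (r + 1) k (A.pd i k h) (glev k a) _
              (by have := Finset.mem_range.1 hk; omega), mul_zero])] at h0
        rw [A.D2 a (r + 1) (r + 1) (A.pd i (r + 1) h) (glev (r + 1) a)] at h0
        exact neg_one_pow_cancel h0
      -- (β) symmetry at sub-level
      have hbeta : ∀ a : Fin ℓ,
          A.pd a r (A.pd i (r + 1) h) = A.pd a (r + 1) (A.pd i r h) := by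
        intro a
        have h0 : A.pd a ((r + 1) + r) (A.S (r + 1 + 1) i h) = 0 := by
          rw [hS i, A.pd_zero]
        rw [S, A.pd_sum] at h0
        simp only [A.pd_neg_one_pow_mul] at h0
        rw [Finset.sum_range_succ, Finset.sum_range_succ] at h0
        rw [Finset.sum_eq_zero (fun k hk => by
          rw [A.D1 a (r + 1) k (A.pd i k h) (glev k a) _
            (by have := Finset.mem_range.1 hk; omega), mul_zero])] at h0
        have e1 : (r + 1) + r = r + (r + 1) := by omega
        rw [e1, A.D2 a (r + 1) r (A.pd i r h) (glev r a)] at h0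
        have e2 : r + (r + 1) = r + r + 1 := by omega
        rw [e2, A.D3 a r r (A.pd i (r + 1) h) (glev (r + 1) a), halpha a, A.d_zero,
          smul_zero, zero_add, zero_add] at h0
        -- h0 : (-1)^r * X + (-1)^(r+1) * Y = 0
        have h1 : (-1 : V) ^ r * (A.pd a r (A.pd i (r + 1) h)
            - A.pd a (r + 1) (A.pd i r h)) = 0 := by
          rw [mul_sub]
          rw [pow_succ] at h0
          linear_combination -h0
        exact sub_eq_zero.mp (neg_one_pow_cancel h1)
      -- `∂h/∂u_i^{(r+1)}` is in the filtration piece `V_{r,i}`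
      have hfiltr_hi : A.inFiltr r i (A.pd i (r + 1) h) := by
        intro jj n hn
        rcases hn with hn | ⟨hnr, hij⟩
        · rcases (by omega : n = r + 1 ∨ r + 1 < n) with rfl | hn'
          · exact halpha jj
          · exact glev (r + 1) jj n hn'
        · rw [hnr, hbeta jj, A.pd_comm, hfil jj (r + 1) (Or.inr ⟨rfl, by
            have hlt := hij; rw [Fin.lt_def] at hlt
            simp only [hidef] at hlt; omega⟩), A.pd_zero]
      obtain ⟨g, hgf, hgpd⟩ := hnormal i r _ hfiltr_hi
      set h' := h - A.d g with hh'
      have hsub : ∀ (j : Fin ℓ) (n : ℕ),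
          A.pd j n h' = A.pd j n h - A.pd j n (A.d g) := fun j n => by
        rw [hh', A.pd_sub]
      have hfil' : ∀ (j : Fin ℓ) (n : ℕ), (r + 1 < n ∨ (n = r + 1 ∧ t ≤ (j : ℕ))) →
          A.pd j n h' = 0 := by
        intro j n hn
        rw [hsub]
        rcases hn with hn | ⟨rfl, hj⟩
        · obtain ⟨n', rfl⟩ : ∃ n', n = n' + 1 := ⟨n - 1, by omega⟩
          rw [hfil j (n' + 1) (Or.inl hn), A.pd_d, hgf j (n' + 1) (Or.inl (by omega)),
            hgf j n' (Or.inl (by omega)), A.d_zero, add_zero, sub_zero]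
        · rcases Nat.eq_or_lt_of_le hj with heq | hlt
          · have hji : j = i := Fin.ext heq.symm
            rw [hji, A.pd_d, hgf i (r + 1) (Or.inl (by omega)), A.d_zero, zero_add,
              hgpd, sub_self]
          · rw [hfil j (r + 1) (Or.inr ⟨rfl, by omega⟩), A.pd_d,
              hgf j (r + 1) (Or.inl (by omega)),
              hgf j r (Or.inr ⟨rfl, by rw [Fin.lt_def]; exact hlt⟩),
              A.d_zero, add_zero, sub_zero]
      have hS' : ∀ j, A.S (r + 1 + 1) j h' = 0 := by
        intro j
        rw [hh', A.S_sub, hS j, A.S_d_zero (r + 1) j g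
          (fun a n hn => hgf a n (Or.inl (by omega))), sub_zero]
      obtain ⟨h'', v, hb2, hs2, he2⟩ := ih (by omega) h' hfil' hS'
      refine ⟨h'', v + g, hb2, hs2, ?_⟩
      rw [A.d_add, ← add_assoc, ← he2, hh']
      ring

/-- Kernel of the Euler operator is `F + ∂V`. -/
lemma ker_euler (hnormal : ∀ (i : Fin ℓ) (m : ℕ) (f : V), A.inFiltr m i f →
      ∃ g, A.inFiltr m i g ∧ A.pd i m g = f) :
    ∀ (m : ℕ) (h : V), (∀ (j : Fin ℓ) (n : ℕ), m ≤ n → A.pd j n h = 0) →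
      (∀ j, A.S m j h = 0) → ∃ c v, A.quasi c ∧ h = c + A.d v := by
  intro m
  induction m with
  | zero =>
    intro h hb _
    exact ⟨h, 0, fun j n => hb j n (Nat.zero_le n), by rw [A.d_zero, add_zero]⟩
  | succ m ih =>
    intro h hb hS
    obtain ⟨h', v, hb', hS', he⟩ := A.descend hnormal m ℓ le_rfl h
      (fun j n hn => by
        rcases hn with hn | ⟨rfl, hj⟩
        · exact hb j n (by omega)
        · exact absurd j.isLt (by omega))
      hS
    obtain ⟨c, v', hc, he'⟩ := ih h' hb'
      (fun j => by rw [← A.S_stable (Nat.le_succ m) j hb']; exact hS' j)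
    exact ⟨c, v' + v, hc, by rw [he, he', A.d_add]; ring⟩

end ADF


/-- let `V` be a normal algebra of differential functions whose
quasiconstant field `F` satisfies `∂F = F`, and let `K(∂)` be a quasiconstant ℓ×ℓ
matrix differential operator with invertible leading coefficient.  Then the
variational derivative `δ/δu` gives a bijection
`Z_K^{−1} = {∫f ∈ V/∂V : K(∂)(δf/δu) = 0} → ker(K(∂)|_{F^ℓ})`, with inverse
`F ↦ ∫ Σ_i F_i u_i`; concretely:
(a) the variational derivative of any `f ∈ Z_K^{−1}` lies in `F^ℓ` (hence in
    `ker(K(∂)|_{F^ℓ})`);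
(b) for every `P ∈ ker(K(∂)|_{F^ℓ})`, the element `Σ_i P_i u_i` has variational
    derivative `P` (surjectivity, with the stated inverse);
(c) two elements of `Z_K^{−1}` with the same variational derivative differ by a
    total derivative, i.e. define the same element of `V/∂V` (injectivity). -/
theorem stmt_18 {ℓ N : ℕ} {V : Type} [CommRing V] [CharZero V] (A : ADF ℓ V)
    (hFfield : ∀ f, A.quasi f → f ≠ 0 → ∃ g, A.quasi g ∧ f * g = 1)
    (hdF : ∀ f, A.quasi f → ∃ g, A.quasi g ∧ A.d g = f)
    (hnormal : ∀ (i : Fin ℓ) (m : ℕ) (f : V), A.inFiltr m i f →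
      ∃ g, A.inFiltr m i g ∧ A.pd i m g = f)
    (K : Fin (N + 1) → Matrix (Fin ℓ) (Fin ℓ) V)
    (hKq : ∀ n i j, A.quasi (K n i j))
    (L : Matrix (Fin ℓ) (Fin ℓ) V)
    (hLq : ∀ i j, A.quasi (L i j))
    (hKL : K (Fin.last N) * L = 1) (hLK : L * K (Fin.last N) = 1) :
    (∀ (f : V) (P : Fin ℓ → V), A.isVarDer f P →
      (∀ i, ∑ n : Fin (N + 1), ∑ j, K n i j * A.d^[(n : ℕ)] (P j) = 0) →
      ∀ j, A.quasi (P j)) ∧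
    (∀ P : Fin ℓ → V, (∀ j, A.quasi (P j)) →
      (∀ i, ∑ n : Fin (N + 1), ∑ j, K n i j * A.d^[(n : ℕ)] (P j) = 0) →
      A.isVarDer (∑ i, P i * A.u i) P) ∧
    (∀ (f g : V) (P : Fin ℓ → V), A.isVarDer f P → A.isVarDer g P →
      (∀ i, ∑ n : Fin (N + 1), ∑ j, K n i j * A.d^[(n : ℕ)] (P j) = 0) →
      ∃ h, f - g = A.d h) := by
  refine ⟨?_, ?_, ?_⟩
  · intro f P _ hKP j
    exact A.kernel_quasi K hKq L hLK P hKP j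
  · intro P hPq _
    exact A.varDer_linear P hPq
  · intro f g P hf hg _
    obtain ⟨Mf, hbf, hPf⟩ := hf
    obtain ⟨Mg, hbg, hPg⟩ := hg
    set M := max Mf Mg with hM
    have hb : ∀ i n, M ≤ n → A.pd i n (f - g) = 0 := fun i n hn => by
      rw [A.pd_sub, hbf i n (le_trans (le_max_left _ _) hn),
        hbg i n (le_trans (le_max_right _ _) hn), sub_zero]
    have hSfg : ∀ j, A.S M j (f - g) = 0 := by
      intro j
      rw [A.S_sub]
      have h1 : A.S M j f = P j := by
        rw [A.S_stable (le_max_left Mf Mg) j hbf]; exact (hPf j).symm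
      have h2 : A.S M j g = P j := by
        rw [A.S_stable (le_max_right Mf Mg) j hbg]; exact (hPg j).symm
      rw [h1, h2, sub_self]
    obtain ⟨c, v, hc, he⟩ := A.ker_euler hnormal M (f - g) hb hSfg
    obtain ⟨w, hwq, hwd⟩ := hdF c hc
    exact ⟨w + v, by rw [A.d_add, hwd, ← he]⟩
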